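/- Let Δ = Δ_0 + Δ_1 + ⋯ + Δ_k be a Minkowski sum decomposition of a reflexive polytope Δ ⊂ ℝ^d into lattice polytopes and σ̄∨ ⊂ ℝ^d ⊕ ℝ^{k+1} the dual of the Cayley cone. If n ∈ Δ* ∩ ℤ^d with n ≠ 0 and α_0, …, α_k ∈ ℝ satisfy α_0 + ⋯ + α_k = 1 and n + Σ_{j=0}^k α_j r_j* ∈ σ̄∨, then α_j = −min⟨Δ_j, n⟩ for every j = 0,…,k. -/

import Mathlib

open scoped Pointwise
open Set

noncomputable section

/-- The standard pairing on `ℝ^n`. -/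
def pairing {n : ℕ} (x y : Fin n → ℝ) : ℝ := ∑ i, x i * y i

/-- A point of `ℝ^n` lying in the lattice `ℤ^n`. -/
def IsLatticePt {n : ℕ} (x : Fin n → ℝ) : Prop := ∀ i, ∃ z : ℤ, x i = (z : ℝ)

/-- A lattice polytope: the convex hull of finitely many lattice points. -/
def IsLatticePolytope {n : ℕ} (P : Set (Fin n → ℝ)) : Prop :=
  ∃ S : Set (Fin n → ℝ), S.Finite ∧ (∀ x ∈ S, IsLatticePt x) ∧ P = convexHull ℝ S

/-- The dual polytope `P* = {y | ⟨x,y⟩ ≥ -1 ∀ x ∈ P}`. -/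
def polarDual {n : ℕ} (P : Set (Fin n → ℝ)) : Set (Fin n → ℝ) :=
  {y | ∀ x ∈ P, -1 ≤ pairing x y}

/-- A reflexive polytope. -/
def IsReflexive {n : ℕ} (P : Set (Fin n → ℝ)) : Prop :=
  IsLatticePolytope P ∧ (0 : Fin n → ℝ) ∈ interior P ∧ IsLatticePolytope (polarDual P)

/-- `min⟨P, u⟩ = min_{x ∈ P} ⟨x, u⟩`. -/
def minPair {n : ℕ} (P : Set (Fin n → ℝ)) (u : Fin n → ℝ) : ℝ :=
  sInf ((fun x => pairing x u) '' P)

/-- The real vector space `ℝ^d ⊕ ℝ^k`. -/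
abbrev Vdk (d k : ℕ) := (Fin d → ℝ) × (Fin k → ℝ)

/-- The pairing on `ℝ^d ⊕ ℝ^k` (sum of the two standard pairings). -/
def pairingV {d k : ℕ} (x y : Vdk d k) : ℝ := pairing x.1 y.1 + pairing x.2 y.2

def IsLatticePtV {d k : ℕ} (x : Vdk d k) : Prop := IsLatticePt x.1 ∧ IsLatticePt x.2

def IsLatticePolytopeV {d k : ℕ} (P : Set (Vdk d k)) : Prop :=
  ∃ S : Set (Vdk d k), S.Finite ∧ (∀ x ∈ S, IsLatticePtV x) ∧ P = convexHull ℝ S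

def polarDualV {d k : ℕ} (P : Set (Vdk d k)) : Set (Vdk d k) :=
  {y | ∀ x ∈ P, -1 ≤ pairingV x y}

def IsReflexiveV {d k : ℕ} (P : Set (Vdk d k)) : Prop :=
  IsLatticePolytopeV P ∧ (0 : Vdk d k) ∈ interior P ∧ IsLatticePolytopeV (polarDualV P)

/-- The Cayley cone `σ̄ = {(t₀Δ₀ + ⋯ + t_kΔ_k, t₀, …, t_k) : tᵢ ≥ 0} ⊆ ℝ^d ⊕ ℝ^{k+1}`. -/
def cayleyCone {d k : ℕ} (Δ : Fin (k+1) → Set (Fin d → ℝ)) : Set (Vdk d (k+1)) :=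
  {p | (∀ i, 0 ≤ p.2 i) ∧ p.1 ∈ ∑ i, p.2 i • Δ i}

/-- The dual cone of a cone in `ℝ^d ⊕ ℝ^k`. -/
def dualConeV {d k : ℕ} (σ : Set (Vdk d k)) : Set (Vdk d k) :=
  {y | ∀ x ∈ σ, 0 ≤ pairingV x y}

/-!
Testing `(n, α)` against the points `(x, r_j)` of the Cayley cone, `x ∈ Δ_j`, gives
`α_j ≥ -min⟨Δ_j, n⟩`. Since `0` is interior to `Δ` and `n ≠ 0`, `n` is negative somewhere on
`Δ`, hence at a lattice vertex, where its value is an integer; so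
`∑ⱼ min⟨Δ_j, n⟩ ≤ min⟨Δ, n⟩ ≤ -1 = -∑ⱼ α_j`, and all the inequalities `α_j ≥ -min⟨Δ_j, n⟩`
are equalities.
-/

section Pairing

open Filter Topology

variable {d : ℕ}

lemma pairing_eq_dotProduct (x y : Fin d → ℝ) : pairing x y = x ⬝ᵥ y := rfl

lemma isLinearMap_pairing_left (n : Fin d → ℝ) : IsLinearMap ℝ (fun x => pairing x n) :=
  ⟨fun x y => add_dotProduct x y n, fun c x => smul_dotProduct c x n⟩

lemma pairing_self_pos {n : Fin d → ℝ} (hn : n ≠ 0) : 0 < pairing n n := by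
  simpa [pairing_eq_dotProduct] using Matrix.dotProduct_self_star_pos_iff.2 hn

lemma IsLatticePt.exists_pairing_eq_intCast {x y : Fin d → ℝ} (hx : IsLatticePt x)
    (hy : IsLatticePt y) : ∃ z : ℤ, pairing x y = z := by
  choose zx hzx using hx
  choose zy hzy using hy
  exact ⟨∑ i, zx i * zy i, by simp [pairing, hzx, hzy]⟩

lemma exists_pairing_neg_of_zero_mem_interior {P : Set (Fin d → ℝ)}
    (hP : (0 : Fin d → ℝ) ∈ interior P) {n : Fin d → ℝ} (hn : n ≠ 0) :
    ∃ x ∈ P, pairing x n < 0 := by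
  have hline : Tendsto (fun t : ℝ => t • n) (𝓝 0) (𝓝 0) := by
    simpa only [zero_smul, id_eq] using (tendsto_id (x := 𝓝 (0 : ℝ))).smul_const n
  have hnear : ∀ᶠ t in 𝓝[<] (0 : ℝ), t • n ∈ P ∧ t < 0 :=
    (tendsto_nhdsWithin_of_tendsto_nhds hline |>.eventually
      (mem_interior_iff_mem_nhds.1 hP)).and self_mem_nhdsWithin
  obtain ⟨t, htP, ht⟩ := hnear.exists
  refine ⟨t • n, htP, ?_⟩
  rw [pairing_eq_dotProduct, smul_dotProduct, smul_eq_mul, ← pairing_eq_dotProduct]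
  exact mul_neg_of_neg_of_pos ht (pairing_self_pos hn)

lemma IsLatticePolytope.exists_pairing_le_neg_one {P : Set (Fin d → ℝ)}
    (hP : IsLatticePolytope P) {n : Fin d → ℝ} (hn : IsLatticePt n) {x : Fin d → ℝ}
    (hx : x ∈ P) (hneg : pairing x n < 0) : ∃ v ∈ P, pairing v n ≤ -1 := by
  obtain ⟨S, -, hSlat, rfl⟩ := hP
  by_contra! hgt
  have hS : S ⊆ {w | 0 ≤ pairing w n} := fun v hv => by
    obtain ⟨z, hz⟩ := (hSlat v hv).exists_pairing_eq_intCast hn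
    have hz_gt : (-1 : ℤ) < z := by exact_mod_cast hz ▸ hgt v (subset_convexHull ℝ S hv)
    simp only [mem_ofPred_eq, hz]
    exact_mod_cast (by omega : 0 ≤ z)
  exact hneg.not_ge (convexHull_min hS (convex_halfSpace_ge (isLinearMap_pairing_left n) 0) hx)

end Pairing

section MinPair

variable {d : ℕ} {P : Set (Fin d → ℝ)} {u : Fin d → ℝ}

lemma minPair_le (hP : BddBelow ((fun x => pairing x u) '' P)) {x : Fin d → ℝ} (hx : x ∈ P) :
    minPair P u ≤ pairing x u :=
  csInf_le hP ⟨x, hx, rfl⟩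

lemma le_minPair (hP : P.Nonempty) {c : ℝ} (h : ∀ x ∈ P, c ≤ pairing x u) : c ≤ minPair P u :=
  le_csInf (hP.image _) (forall_mem_image.2 h)

lemma sum_minPair_le_pairing_of_mem_sum {ι : Type*} [Fintype ι] {Q : ι → Set (Fin d → ℝ)}
    (hQ : ∀ j, BddBelow ((fun x => pairing x u) '' Q j)) {v : Fin d → ℝ} (hv : v ∈ ∑ j, Q j) :
    ∑ j, minPair (Q j) u ≤ pairing v u := by
  obtain ⟨w, hw, rfl⟩ := (mem_fintype_sum _ _).1 hv
  rw [pairing_eq_dotProduct, sum_dotProduct]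
  exact Finset.sum_le_sum fun j _ => minPair_le (hQ j) (hw j)

end MinPair

section CayleyCone

variable {d k : ℕ} {Δ : Fin (k+1) → Set (Fin d → ℝ)}

lemma mk_single_mem_cayleyCone (hΔ : ∀ i, (Δ i).Nonempty) {j : Fin (k+1)} {x : Fin d → ℝ}
    (hx : x ∈ Δ j) : (x, (Pi.single j 1 : Fin (k+1) → ℝ)) ∈ cayleyCone Δ := by
  refine ⟨fun i => by by_cases h : i = j <;> simp [h], ?_⟩
  show x ∈ ∑ i, (Pi.single j 1 : Fin (k+1) → ℝ) i • Δ i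
  rwa [Finset.sum_eq_single j
    (fun i _ hij => by rw [Pi.single_eq_of_ne hij, zero_smul_set (hΔ i)]) (by simp),
    Pi.single_eq_same, one_smul]

lemma neg_le_pairing_of_mem_dualConeV_cayleyCone {n : Fin d → ℝ} {α : Fin (k+1) → ℝ}
    (hmem : ((n, α) : Vdk d (k+1)) ∈ dualConeV (cayleyCone Δ)) (hΔ : ∀ i, (Δ i).Nonempty)
    {j : Fin (k+1)} {x : Fin d → ℝ} (hx : x ∈ Δ j) : -α j ≤ pairing x n := by
  have := hmem _ (mk_single_mem_cayleyCone hΔ hx)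
  simp only [pairingV, pairing_eq_dotProduct, single_dotProduct, one_mul] at this ⊢
  linarith

end CayleyCone

theorem dual_cone_level_one_coeffs_general {d k : ℕ}
    (Δ : Fin (k+1) → Set (Fin d → ℝ))
    (hrefl : IsReflexive (∑ i, Δ i))
    (n : Fin d → ℝ) (hnlat : IsLatticePt n)
    (hne : n ≠ 0)
    (α : Fin (k+1) → ℝ) (hα : ∑ j, α j = 1)
    (hmem : ((n, α) : Vdk d (k+1)) ∈ dualConeV (cayleyCone Δ)) :
    ∀ j, α j = -(minPair (Δ j) n) := by
  obtain ⟨hlat, h0, -⟩ := hrefl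
  have hΔ : ∀ i, (Δ i).Nonempty := by
    obtain ⟨g, hg, -⟩ := (mem_fintype_sum _ _).1 (interior_subset h0)
    exact fun i => ⟨g i, hg i⟩
  have hlow (j) (x) (hx : x ∈ Δ j) : -α j ≤ pairing x n :=
    neg_le_pairing_of_mem_dualConeV_cayleyCone hmem hΔ hx
  obtain ⟨x, hx, hxneg⟩ := exists_pairing_neg_of_zero_mem_interior h0 hne
  obtain ⟨v, hv, hv_le⟩ := hlat.exists_pairing_le_neg_one hnlat hx hxneg
  have hsum : ∑ j, minPair (Δ j) n ≤ ∑ j, -α j := calc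
    ∑ j, minPair (Δ j) n ≤ pairing v n :=
      sum_minPair_le_pairing_of_mem_sum (fun j => ⟨-α j, forall_mem_image.2 (hlow j)⟩) hv
    _ ≤ -1 := hv_le
    _ = ∑ j, -α j := by rw [Finset.sum_neg_distrib, hα]
  have hle (j) (_ : j ∈ Finset.univ) : -α j ≤ minPair (Δ j) n := le_minPair (hΔ j) (hlow j)
  have heq := (Finset.sum_eq_sum_iff_of_le hle).1 (le_antisymm (Finset.sum_le_sum hle) hsum)
  exact fun j => neg_eq_iff_eq_neg.1 (heq j (Finset.mem_univ j))

/-- if `n ∈ Δ* ∩ ℤ^d` is nonzero and `n + Σⱼ αⱼrⱼ* ∈ σ̄∨` with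
`Σⱼ αⱼ = 1`, then `αⱼ = −min⟨Δⱼ, n⟩` for every `j`. -/
theorem dual_cone_level_one_coeffs {d k : ℕ}
    (Δ : Fin (k+1) → Set (Fin d → ℝ))
    (hlat : ∀ i, IsLatticePolytope (Δ i))
    (hrefl : IsReflexive (∑ i, Δ i))
    (n : Fin d → ℝ) (hnlat : IsLatticePt n) (hn : n ∈ polarDual (∑ i, Δ i))
    (hne : n ≠ 0)
    (α : Fin (k+1) → ℝ) (hα : ∑ j, α j = 1)
    (hmem : ((n, α) : Vdk d (k+1)) ∈ dualConeV (cayleyCone Δ)) :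
    ∀ j, α j = -(minPair (Δ j) n) :=
  dual_cone_level_one_coeffs_general Δ hrefl n hnlat hne α hα hmem
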